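/- With χ as above and K, l₀, F_load, F_s > 0: if x₁ ≤ ... ≤ x_m (m ≥ 1), c is the cargo equilibrium position (F_load = ∑_i χ(x_i - c)), and x_m - x₁ ≥ (m·F_s - F_load)/K + 2l₀, then χ(x_m - c) ≥ F_s (the vanguard motor is stalled). -/
import Mathlib


/-- Elastic force with dead zone. -/
noncomputable def chi (K l₀ : ℝ) (l : ℝ) : ℝ :=
  if l > l₀ then K * (l - l₀) else if l < -l₀ then K * (l + l₀) else 0

lemma chi_ge (K l₀ l : ℝ) (hK : 0 < K) (hl : 0 < l₀) : K * (l - l₀) ≤ chi K l₀ l := by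
  unfold chi; split_ifs <;> nlinarith

lemma chi_le (K l₀ l : ℝ) (hK : 0 < K) (hl : 0 < l₀) : chi K l₀ l ≤ K * (l + l₀) := by
  unfold chi; split_ifs <;> nlinarith

lemma chi_mono (K l₀ : ℝ) (hK : 0 < K) (hl : 0 < l₀) {a b : ℝ} (hab : a ≤ b) :
    chi K l₀ a ≤ chi K l₀ b := by
  unfold chi; split_ifs <;> nlinarith

/-- If the spread is at least `(m·F_s - F_load)/K + 2l₀` then the vanguard motor is
stalled: `χ(x_m - c) ≥ F_s`. -/
theorem vanguard_stalled (K l₀ F Fs : ℝ) (hK : 0 < K) (hl : 0 < l₀)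
    (hF : 0 < F) (hFs : 0 < Fs) (m : ℕ) (hm : 1 ≤ m) (x : Fin m → ℝ) (hx : Monotone x)
    (c : ℝ) (heq : F = ∑ i, chi K l₀ (x i - c))
    (hspread : x ⟨m - 1, by omega⟩ - x ⟨0, by omega⟩ ≥ (m * Fs - F) / K + 2 * l₀) :
    Fs ≤ chi K l₀ (x ⟨m - 1, by omega⟩ - c) := by
  set j : Fin m := ⟨m - 1, by omega⟩ with hj
  set z : Fin m := ⟨0, by omega⟩ with hz
  set A := chi K l₀ (x j - c) with hA
  set B := chi K l₀ (x z - c) with hB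
  -- each term is at most A
  have hterm : ∀ i : Fin m, chi K l₀ (x i - c) ≤ A := by
    intro i
    exact chi_mono K l₀ hK hl (by
      have : x i ≤ x j := hx (by rw [Fin.le_def]; simp [hj]; omega)
      linarith)
  -- F ≤ B + (m-1) * A
  have hsum : F ≤ B + ((m : ℝ) - 1) * A := by
    have hsplit := Finset.add_sum_erase Finset.univ (fun i => chi K l₀ (x i - c))
      (Finset.mem_univ z)
    have hrest : ∑ i ∈ Finset.univ.erase z, chi K l₀ (x i - c)
        ≤ ((m : ℝ) - 1) * A := by
      have hcard : (Finset.univ.erase z).card = m - 1 := by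
        rw [Finset.card_erase_of_mem (Finset.mem_univ z)]
        simp
      calc ∑ i ∈ Finset.univ.erase z, chi K l₀ (x i - c)
          ≤ ∑ _i ∈ Finset.univ.erase z, A :=
            Finset.sum_le_sum (fun i _ => hterm i)
        _ = ((m - 1 : ℕ) : ℝ) * A := by rw [Finset.sum_const, hcard, nsmul_eq_mul]
        _ = ((m : ℝ) - 1) * A := by
            congr 1
            push_cast [Nat.cast_sub hm]
            ring
    calc F = ∑ i, chi K l₀ (x i - c) := heq
      _ = B + ∑ i ∈ Finset.univ.erase z, chi K l₀ (x i - c) := by rw [← hsplit]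
      _ ≤ B + ((m : ℝ) - 1) * A := by linarith
  -- chi bounds
  have h1 : K * ((x j - c) - l₀) ≤ A := chi_ge K l₀ _ hK hl
  have h2 : B ≤ K * ((x z - c) + l₀) := chi_le K l₀ _ hK hl
  -- spread bound multiplied out
  have h3 : m * Fs - F ≤ K * (x j - x z - 2 * l₀) := by
    have : (m * Fs - F) / K ≤ x j - x z - 2 * l₀ := by linarith [hspread]
    calc m * Fs - F = (m * Fs - F) / K * K := by field_simp
      _ ≤ (x j - x z - 2 * l₀) * K := by
          exact mul_le_mul_of_nonneg_right this (le_of_lt hK)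
      _ = K * (x j - x z - 2 * l₀) := by ring
  have hm1 : (1 : ℝ) ≤ (m : ℝ) := by exact_mod_cast hm
  -- combine: B ≤ A - (m*Fs - F), then F ≤ A - m*Fs + F + (m-1)*A, so m*Fs ≤ m*A
  have hkey : (m : ℝ) * Fs ≤ (m : ℝ) * A := by nlinarith
  nlinarith
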